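/- Let A be an M × M matrix with nonnegative entries and let f(1), ..., f(M) be real numbers. Then the function θ ↦ log ρ(A D_θ), where D_θ is the diagonal matrix with diagonal entries exp(θ f(1)), ..., exp(θ f(M)) and ρ denotes the spectral radius, is a convex function of θ ∈ ℝ. -/

import Mathlib

/-!
Kingman's argument. The entries of `A * D_θ` are `A i j * exp (θ * f j)`, so the matrix at
`a x + b y` is the entrywise weighted geometric mean of the matrices at `x` and `y`. By Hölder's
inequality, entrywise domination by such a geometric mean survives matrix products, hence powers,
and passes to the row-sum norm: `‖R ^ k‖ ≤ ‖P ^ k‖ ^ a * ‖Q ^ k‖ ^ b`. Taking `k`-th roots,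
Gelfand's formula `ρ(B) = lim ‖B ^ k‖ ^ (1 / k)` gives `ρ(R) ≤ ρ(P) ^ a * ρ(Q) ^ b`, which is
the log-convexity of `θ ↦ ρ(A D_θ)`.
-/

open MeasureTheory Filter

/-- The spectral radius of a real square matrix: the maximum modulus of its
(complex) eigenvalues. -/
noncomputable def specRad {M : ℕ} (A : Matrix (Fin M) (Fin M) ℝ) : ℝ :=
  (spectralRadius ℂ (A.map (fun x => (x : ℂ)))).toReal

/-- The diagonal matrix `D_θ` with entries `exp (θ f i)`. -/
noncomputable def Dmat {M : ℕ} (f : Fin M → ℝ) (θ : ℝ) :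
    Matrix (Fin M) (Fin M) ℝ :=
  Matrix.diagonal fun i => Real.exp (θ * f i)

open Real Matrix Topology

attribute [local instance] Matrix.linftyOpSeminormedAddCommGroup Matrix.linftyOpNormedRing
  Matrix.linftyOpNormedAlgebra

theorem Real.sum_rpow_mul_rpow_le {ι : Type*} (s : Finset ι) {a b : ℝ} (ha : 0 < a) (hb : 0 < b)
    (hab : a + b = 1) {u v : ι → ℝ} (hu : ∀ i ∈ s, 0 ≤ u i) (hv : ∀ i ∈ s, 0 ≤ v i) :
    ∑ i ∈ s, u i ^ a * v i ^ b ≤ (∑ i ∈ s, u i) ^ a * (∑ i ∈ s, v i) ^ b := by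
  have hpq : HolderConjugate a⁻¹ b⁻¹ := .inv_inv ha hb hab
  calc ∑ i ∈ s, u i ^ a * v i ^ b
      ≤ (∑ i ∈ s, (u i ^ a) ^ a⁻¹) ^ (1 / a⁻¹) * (∑ i ∈ s, (v i ^ b) ^ b⁻¹) ^ (1 / b⁻¹) :=
        inner_le_Lp_mul_Lq_of_nonneg s hpq (fun i hi => rpow_nonneg (hu i hi) a)
          (fun i hi => rpow_nonneg (hv i hi) b)
    _ = (∑ i ∈ s, u i) ^ a * (∑ i ∈ s, v i) ^ b := by
        rw [Finset.sum_congr rfl fun i hi => rpow_rpow_inv (hu i hi) ha.ne',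
          Finset.sum_congr rfl fun i hi => rpow_rpow_inv (hv i hi) hb.ne', one_div, one_div,
          inv_inv, inv_inv]

namespace Matrix

section LinftyOp

variable {m n α : Type*} [Fintype m] [Fintype n] [SeminormedAddCommGroup α]

theorem linfty_opNorm_le_iff {A : Matrix m n α} {r : ℝ} (hr : 0 ≤ r) :
    ‖A‖ ≤ r ↔ ∀ i, ∑ j, ‖A i j‖ ≤ r := by
  change ‖fun i => WithLp.toLp 1 (A i)‖ ≤ r ↔ _
  simp [pi_norm_le_iff_of_nonneg hr, PiLp.norm_eq_of_L1]

theorem linfty_opNorm_map_eq {β : Type*} [SeminormedAddCommGroup β]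
    (A : Matrix m n α) (f : α → β) (hf : ∀ x, ‖f x‖ = ‖x‖) : ‖A.map f‖ = ‖A‖ := by
  have hf' (x : α) : ‖f x‖₊ = ‖x‖₊ := NNReal.eq (hf x)
  simp only [linfty_opNorm_def, map_apply, hf']

theorem sum_le_linfty_opNorm_of_nonneg {A : Matrix m n ℝ} (i : m)
    (hA : ∀ j, 0 ≤ A i j) : ∑ j, A i j ≤ ‖A‖ := by
  simpa only [Real.norm_of_nonneg (hA _)] using
    (linfty_opNorm_le_iff (norm_nonneg A)).mp le_rfl i

end LinftyOp

section GeomMean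

variable {n : Type*} {a b : ℝ} {R P Q : Matrix n n ℝ}

structure LeGeomMean (a b : ℝ) (R P Q : Matrix n n ℝ) : Prop where
  nonneg : ∀ i j, 0 ≤ R i j
  nonneg_left : ∀ i j, 0 ≤ P i j
  nonneg_right : ∀ i j, 0 ≤ Q i j
  le : ∀ i j, R i j ≤ P i j ^ a * Q i j ^ b

theorem LeGeomMean.one [DecidableEq n] : LeGeomMean a b (1 : Matrix n n ℝ) 1 1 := by
  have h01 (i j : n) : 0 ≤ (1 : Matrix n n ℝ) i j := by
    rw [one_apply]; split_ifs <;> norm_num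
  refine ⟨h01, h01, h01, fun i j => ?_⟩
  rw [one_apply]
  split_ifs
  · simp
  · positivity

theorem LeGeomMean.mul [Fintype n] (ha : 0 < a) (hb : 0 < b) (hab : a + b = 1)
    {R' P' Q' : Matrix n n ℝ} (h : LeGeomMean a b R P Q) (h' : LeGeomMean a b R' P' Q') :
    LeGeomMean a b (R * R') (P * P') (Q * Q') where
  nonneg i j := Finset.sum_nonneg fun k _ => mul_nonneg (h.nonneg i k) (h'.nonneg k j)
  nonneg_left i j :=
    Finset.sum_nonneg fun k _ => mul_nonneg (h.nonneg_left i k) (h'.nonneg_left k j)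
  nonneg_right i j :=
    Finset.sum_nonneg fun k _ => mul_nonneg (h.nonneg_right i k) (h'.nonneg_right k j)
  le i j := by
    have hP k := mul_nonneg (h.nonneg_left i k) (h'.nonneg_left k j)
    have hQ k := mul_nonneg (h.nonneg_right i k) (h'.nonneg_right k j)
    calc (R * R') i j = ∑ k, R i k * R' k j := mul_apply
      _ ≤ ∑ k, (P i k * P' k j) ^ a * (Q i k * Q' k j) ^ b := by
          refine Finset.sum_le_sum fun k _ => ?_
          calc R i k * R' k j ≤ (P i k ^ a * Q i k ^ b) * (P' k j ^ a * Q' k j ^ b) :=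
                mul_le_mul (h.le i k) (h'.le k j) (h'.nonneg k j)
                  (mul_nonneg (rpow_nonneg (h.nonneg_left i k) a)
                    (rpow_nonneg (h.nonneg_right i k) b))
            _ = (P i k * P' k j) ^ a * (Q i k * Q' k j) ^ b := by
                rw [mul_rpow (h.nonneg_left i k) (h'.nonneg_left k j),
                  mul_rpow (h.nonneg_right i k) (h'.nonneg_right k j)]
                ring
      _ ≤ (∑ k, P i k * P' k j) ^ a * (∑ k, Q i k * Q' k j) ^ b :=
          sum_rpow_mul_rpow_le _ ha hb hab (fun k _ => hP k) fun k _ => hQ k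

theorem LeGeomMean.pow [Fintype n] [DecidableEq n] (ha : 0 < a) (hb : 0 < b) (hab : a + b = 1)
    (h : LeGeomMean a b R P Q) (k : ℕ) : LeGeomMean a b (R ^ k) (P ^ k) (Q ^ k) := by
  induction k with
  | zero => exact .one
  | succ k ih => simpa only [pow_succ] using ih.mul ha hb hab h

theorem LeGeomMean.norm_le [Fintype n] (ha : 0 < a) (hb : 0 < b) (hab : a + b = 1)
    (h : LeGeomMean a b R P Q) : ‖R‖ ≤ ‖P‖ ^ a * ‖Q‖ ^ b := by
  refine (linfty_opNorm_le_iff (by positivity)).mpr fun i => ?_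
  have hPi : 0 ≤ ∑ j, P i j := Finset.sum_nonneg fun j _ => h.nonneg_left i j
  have hQi : 0 ≤ ∑ j, Q i j := Finset.sum_nonneg fun j _ => h.nonneg_right i j
  calc ∑ j, ‖R i j‖ = ∑ j, R i j := by simp only [Real.norm_of_nonneg (h.nonneg i _)]
    _ ≤ ∑ j, P i j ^ a * Q i j ^ b := Finset.sum_le_sum fun j _ => h.le i j
    _ ≤ (∑ j, P i j) ^ a * (∑ j, Q i j) ^ b :=
        sum_rpow_mul_rpow_le _ ha hb hab (fun j _ => h.nonneg_left i j)
          fun j _ => h.nonneg_right i j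
    _ ≤ ‖P‖ ^ a * ‖Q‖ ^ b := by
        gcongr
        exacts [sum_le_linfty_opNorm_of_nonneg i (h.nonneg_left i),
          sum_le_linfty_opNorm_of_nonneg i (h.nonneg_right i)]

end GeomMean

end Matrix

theorem specRad_nonneg {M : ℕ} (B : Matrix (Fin M) (Fin M) ℝ) : 0 ≤ specRad B :=
  ENNReal.toReal_nonneg

theorem tendsto_norm_pow_rpow_specRad {M : ℕ} (B : Matrix (Fin M) (Fin M) ℝ) :
    Tendsto (fun k : ℕ => ‖B ^ k‖ ^ (1 / k : ℝ)) atTop (𝓝 (specRad B)) := by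
  set Bc := B.map ((↑) : ℝ → ℂ)
  have hfin : spectralRadius ℂ Bc ≠ ⊤ :=
    ((spectrum.spectralRadius_le_pow_nnnorm_pow_one_div ℂ Bc 0).trans_lt (by finiteness)).ne
  refine ((ENNReal.tendsto_toReal hfin).comp
    (spectrum.pow_nnnorm_pow_one_div_tendsto_nhds_spectralRadius Bc)).congr fun k => ?_
  have hpow : Bc ^ k = (B ^ k).map ((↑) : ℝ → ℂ) :=
    ((Complex.ofRealHom.mapMatrix).map_pow B k).symm
  simp only [Function.comp_apply, ← ENNReal.toReal_rpow, ENNReal.coe_toReal, coe_nnnorm, hpow,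
    linfty_opNorm_map_eq _ _ Complex.norm_real]

theorem specRad_le_rpow_mul_rpow {M : ℕ} {a b : ℝ} (ha : 0 < a) (hb : 0 < b) (hab : a + b = 1)
    {R P Q : Matrix (Fin M) (Fin M) ℝ} (h : LeGeomMean a b R P Q) :
    specRad R ≤ specRad P ^ a * specRad Q ^ b := by
  refine le_of_tendsto_of_tendsto' (tendsto_norm_pow_rpow_specRad R)
    (((tendsto_norm_pow_rpow_specRad P).rpow_const (.inr ha.le)).mul
      ((tendsto_norm_pow_rpow_specRad Q).rpow_const (.inr hb.le))) fun k => ?_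
  calc ‖R ^ k‖ ^ (1 / k : ℝ) ≤ (‖P ^ k‖ ^ a * ‖Q ^ k‖ ^ b) ^ (1 / k : ℝ) := by
        gcongr
        exact (h.pow ha hb hab k).norm_le ha hb hab
    _ = (‖P ^ k‖ ^ (1 / k : ℝ)) ^ a * (‖Q ^ k‖ ^ (1 / k : ℝ)) ^ b := by
        rw [mul_rpow (by positivity) (by positivity), ← rpow_mul (norm_nonneg _),
          ← rpow_mul (norm_nonneg _), ← rpow_mul (norm_nonneg _), ← rpow_mul (norm_nonneg _),
          mul_comm a, mul_comm b]

theorem leGeomMean_mul_Dmat {M : ℕ} {A : Matrix (Fin M) (Fin M) ℝ} (hA : ∀ i j, 0 ≤ A i j)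
    (f : Fin M → ℝ) (x y : ℝ) {a b : ℝ} (hab : a + b = 1) :
    LeGeomMean a b (A * Dmat f (a * x + b * y)) (A * Dmat f x) (A * Dmat f y) := by
  have entry (θ : ℝ) (i j : Fin M) : (A * Dmat f θ) i j = A i j * exp (θ * f j) := by
    simp only [Dmat, mul_diagonal]
  have nonneg (θ : ℝ) (i j : Fin M) : 0 ≤ (A * Dmat f θ) i j := by
    rw [entry]; exact mul_nonneg (hA i j) (exp_pos _).le
  refine ⟨nonneg _, nonneg _, nonneg _, fun i j => le_of_eq ?_⟩
  rw [entry, entry, entry, mul_rpow (hA i j) (exp_pos _).le, mul_rpow (hA i j) (exp_pos _).le,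
    ← exp_mul, ← exp_mul, mul_mul_mul_comm, ← rpow_add' (hA i j) (by simp [hab]), hab, rpow_one,
    ← exp_add]
  ring_nf

theorem convexOn_univ_log_of_le_rpow_mul_rpow {E : Type*} [AddCommGroup E] [Module ℝ E]
    {g : E → ℝ} (hg : ∀ x, 0 ≤ g x)
    (h : ∀ x y : E, ∀ a b : ℝ, 0 < a → 0 < b → a + b = 1 →
      g (a • x + b • y) ≤ g x ^ a * g y ^ b) :
    ConvexOn ℝ Set.univ fun x => log (g x) := by
  -- As `log 0 = 0`, a zero of `g` must spread to all of `E`; the midpoint inequality makes it.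
  by_cases! hzero : ∃ x₀, g x₀ = 0
  · obtain ⟨x₀, hx₀⟩ := hzero
    have hg0 (x : E) : g x = 0 := by
      have hmid : (1 / 2 : ℝ) • x₀ + (1 / 2 : ℝ) • ((2 : ℝ) • x - x₀) = x := by module
      have := h x₀ ((2 : ℝ) • x - x₀) (1 / 2) (1 / 2) (by norm_num) (by norm_num) (by norm_num)
      rw [hmid, hx₀, zero_rpow (by norm_num), zero_mul] at this
      exact this.antisymm (hg x)
    simpa only [hg0, log_zero] using convexOn_const (0 : ℝ) convex_univ
  · have hpos (x : E) : 0 < g x := (hg x).lt_of_ne' (hzero x)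
    refine convexOn_iff_forall_pos.mpr ⟨convex_univ, fun x _ y _ a b ha hb hab => ?_⟩
    calc log (g (a • x + b • y)) ≤ log (g x ^ a * g y ^ b) :=
          log_le_log (hpos _) (h x y a b ha hb hab)
      _ = a • log (g x) + b • log (g y) := by
          rw [log_mul (rpow_pos_of_pos (hpos x) a).ne' (rpow_pos_of_pos (hpos y) b).ne',
            log_rpow (hpos x), log_rpow (hpos y), smul_eq_mul, smul_eq_mul]

/-- **Convexity of the log-spectral-radius.** Let `A` be an `M × M` matrix with
nonnegative entries and `f 0, …, f (M-1)` real numbers.  Then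
`θ ↦ log ρ(A D_θ)` is convex on `ℝ`, where `D_θ = diag (exp (θ f i))` and `ρ`
denotes the spectral radius. -/
theorem convexOn_log_spectralRadius
    (M : ℕ) (A : Matrix (Fin M) (Fin M) ℝ) (hA : ∀ i j, 0 ≤ A i j)
    (f : Fin M → ℝ) :
    ConvexOn ℝ Set.univ fun θ : ℝ => Real.log (specRad (A * Dmat f θ)) :=
  convexOn_univ_log_of_le_rpow_mul_rpow (fun _ => specRad_nonneg _) fun x y _ _ ha hb hab =>
    specRad_le_rpow_mul_rpow ha hb hab (leGeomMean_mul_Dmat hA f x y hab)
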